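/- Let ℓ ≥ 1 and n = 2ℓ + 1. Every element g of the alternating group Alt_n has a unique presentation of the form g = t_3^{i_3} · ∏_{r=2}^{ℓ} (u_{2r}^{j_{2r}} · v_{2r}^{k_{2r}} · t_{2r+1}^{i_{2r+1}}), where the product is taken over r = 2, 3, ..., ℓ in increasing order, and the exponents are integers satisfying 0 ≤ i_3 < 3, and for every 2 ≤ r ≤ ℓ: 0 ≤ j_{2r} < 2, 0 ≤ k_{2r} < r, and 0 ≤ i_{2r+1} < 2r + 1. In other words, the ordered sequence t_3, u_4, v_4, t_5, ..., u_{2ℓ}, v_{2ℓ}, t_{2ℓ+1} forms an OGS for Alt_{2ℓ+1}. -/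

import Mathlib

/- We work in the symmetric group on `Fin n` (representing `{1, ..., n}` via `i ↦ i - 1`).
The paper multiplies permutations left-to-right: `(π₁ · π₂)(i) = π₂(π₁(i))`,
while Mathlib's `*` on `Equiv.Perm` is function composition: `(π₁ * π₂)(i) = π₁(π₂(i))`.
Hence a paper product `A · B · C` is rendered below as `C * B * A`. -/

/-- `sP n i` is the transposition `sᵢ = (i, i+1)` (1-indexed), for `1 ≤ i ≤ n - 1`. -/
def sP (n i : ℕ) : Equiv.Perm (Fin n) :=
  if h : 1 ≤ i ∧ i < n then
    Equiv.swap ⟨i - 1, lt_of_le_of_lt (Nat.sub_le i 1) h.2⟩ ⟨i, h.2⟩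
  else 1

/-- `tP n m` is `t_m = s₁ · s₂ ⋯ s_{m-1}` (paper's left-to-right product, so here the
factor for larger index is multiplied on the left).  `tP n 0 = tP n 1 = 1`. -/
def tP (n m : ℕ) : Equiv.Perm (Fin n) :=
  (List.range (m - 1)).foldl (fun g j => sP n (j + 1) * g) 1

/-- `uP n r` is `u_{2r} = t_{2r-2} · s_{2r-1}` (paper order; here reversed). -/
def uP (n r : ℕ) : Equiv.Perm (Fin n) := sP n (2 * r - 1) * tP n (2 * r - 2)

/-- `vP n r` is `v_{2r} = t_{2r}²`. -/
def vP (n r : ℕ) : Equiv.Perm (Fin n) := (tP n (2 * r)) ^ 2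
/-!
Every generator `t_{2r+1}`, `u_{2r}` (`r ≥ 2`), `v_{2r}` is even, so every word lies in
`Alt_{2ℓ+1}`. The block `u_{2r}^j v_{2r}^k t_{2r+1}^i` moves only the points `1, …, 2r+1`,
while the blocks multiplied before it fix `2r` and `2r+1`. So if two words agree, their last
blocks agree on `2r` and `2r+1`: the image of `2r+1` is `2r+1-i`, and after cancelling
`t_{2r+1}^i` the image of `2r` is `2r-j-2k`, which determines `j` and `k`. Peeling off blocks
shows that the word map is injective, and it is onto because there are
`3 · ∏_{r=2}^{ℓ} 2r(2r+1) = (2ℓ+1)!/2` exponent tuples.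
-/

open Equiv Finset

theorem Subgroup.foldl_mul_left_mem {G ι : Type*} [Group G] (H : Subgroup G) {f : ι → G}
    (hf : ∀ i, f i ∈ H) (l : List ι) {a : G} (ha : a ∈ H) :
    l.foldl (fun acc i => f i * acc) a ∈ H := by
  induction l generalizing a with
  | nil => exact ha
  | cons i l ih => exact ih (H.mul_mem (hf i) ha)

section Generators

variable {n : ℕ}

lemma sP_apply {i : ℕ} (h1 : 1 ≤ i) (h2 : i < n) (x : Fin n) :
    (sP n i x : ℕ) = if (x : ℕ) = i - 1 then i else if (x : ℕ) = i then i - 1 else x := by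
  rw [sP, dif_pos ⟨h1, h2⟩, swap_apply_def]
  simp only [Fin.ext_iff]
  split_ifs <;> simp_all

lemma sign_sP {i : ℕ} (h1 : 1 ≤ i) (h2 : i < n) : Perm.sign (sP n i) = -1 := by
  rw [sP, dif_pos ⟨h1, h2⟩]
  exact Perm.sign_swap (by simp [Fin.ext_iff]; omega)

lemma tP_succ {m : ℕ} (hm : 1 ≤ m) : tP n (m + 1) = sP n m * tP n m := by
  obtain ⟨m, rfl⟩ := Nat.exists_eq_add_of_le' hm
  simp [tP, List.range_succ, List.foldl_append]

lemma tP_apply_of_le {m : ℕ} {x : Fin n} (hx : m ≤ x) : tP n m x = x := by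
  induction m with
  | zero => rfl
  | succ m ih =>
    rcases Nat.eq_zero_or_pos m with rfl | hm
    · rfl
    · apply Fin.ext
      rw [tP_succ hm, Perm.mul_apply, ih (by omega), sP_apply hm (by omega)]
      split_ifs <;> omega

lemma tP_apply_of_lt {m : ℕ} {x : Fin n} (hx : x < m) (hm : m ≤ n) :
    (tP n m x : ℕ) = if (x : ℕ) = 0 then m - 1 else x - 1 := by
  induction m with
  | zero => omega
  | succ m ih =>
    rcases Nat.eq_zero_or_pos m with rfl | hm0
    · obtain hx0 : (x : ℕ) = 0 := by omega
      simp [tP, hx0]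
    · rw [tP_succ hm0, Perm.mul_apply, sP_apply hm0 (by omega)]
      rcases Nat.lt_or_ge x m with hxm | hxm
      · rw [ih hxm (by omega)]
        split_ifs <;> omega
      · rw [tP_apply_of_le hxm]
        split_ifs <;> omega

lemma tP_pow_apply_of_lt {m i : ℕ} {x : Fin n} (hx : x < m) (hm : m ≤ n) (hi : i < m) :
    ((tP n m ^ i) x : ℕ) = if i ≤ x then x - i else x + m - i := by
  induction i with
  | zero => simp
  | succ i ih =>
    have hprev := ih (by omega)
    rw [pow_succ', Perm.mul_apply, tP_apply_of_lt (by rw [hprev]; split_ifs <;> omega) hm,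
      hprev]
    split_ifs <;> omega

lemma tP_pow_apply_sub_one {m i : ℕ} (hm : m ≤ n) (hi : i < m) :
    ((tP n m ^ i) ⟨m - 1, by omega⟩ : ℕ) = m - 1 - i := by
  rw [tP_pow_apply_of_lt (by simp; omega) hm hi, if_pos (by simp; omega)]

lemma sign_tP {m : ℕ} (hm : m ≤ n) : Perm.sign (tP n m) = (-1) ^ (m - 1) := by
  induction m with
  | zero => simp [tP]
  | succ m ih =>
    rcases Nat.eq_zero_or_pos m with rfl | hm0
    · simp [tP]
    · rw [tP_succ hm0, map_mul, sign_sP hm0 (by omega), ih (by omega),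
        show m + 1 - 1 = m - 1 + 1 by omega, pow_succ, mul_comm]

lemma tP_mem_alternatingGroup {m : ℕ} (hm : m ≤ n) (hodd : Odd m) :
    tP n m ∈ alternatingGroup (Fin n) := by
  obtain ⟨k, rfl⟩ := hodd
  rw [Perm.mem_alternatingGroup, sign_tP hm, show 2 * k + 1 - 1 = 2 * k by omega, pow_mul]
  simp

lemma uP_apply_of_le {r : ℕ} (hr : 1 ≤ r) {x : Fin n} (hx : 2 * r ≤ x) : uP n r x = x := by
  apply Fin.ext
  rw [uP, Perm.mul_apply, tP_apply_of_le (by omega), sP_apply (by omega) (by omega)]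
  split_ifs <;> omega

lemma uP_mem_alternatingGroup {r : ℕ} (hr : 2 ≤ r) (hn : 2 * r ≤ n) :
    uP n r ∈ alternatingGroup (Fin n) := by
  obtain ⟨k, rfl⟩ := Nat.exists_eq_add_of_le' hr
  rw [Perm.mem_alternatingGroup, uP, map_mul, sign_sP (by omega) (by omega), sign_tP (by omega),
    show 2 * (k + 2) - 2 - 1 = 2 * k + 1 by omega, pow_succ, pow_mul]
  simp

lemma vP_mem_alternatingGroup (r : ℕ) : vP n r ∈ alternatingGroup (Fin n) := by
  rw [Perm.mem_alternatingGroup, vP, map_pow, Int.units_sq]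

end Generators

/-- The paper's block `u_{2r}^j · v_{2r}^k · t_{2r+1}^i`. -/
def blockPerm (n r j k i : ℕ) : Perm (Fin n) :=
  tP n (2 * r + 1) ^ i * vP n r ^ k * uP n r ^ j

section Blocks

variable {n r : ℕ}

lemma blockPerm_apply_of_le (hr : 1 ≤ r) (j k i : ℕ) {x : Fin n} (hx : 2 * r + 1 ≤ x) :
    blockPerm n r j k i x = x := by
  have hu : uP n r x = x := uP_apply_of_le hr (by omega)
  have hv : tP n (2 * r) x = x := tP_apply_of_le (by omega)
  rw [blockPerm, Perm.mul_apply, Perm.mul_apply, Perm.pow_apply_eq_self_of_apply_eq_self hu,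
    vP, ← pow_mul, Perm.pow_apply_eq_self_of_apply_eq_self hv,
    Perm.pow_apply_eq_self_of_apply_eq_self (tP_apply_of_le hx)]

lemma blockPerm_apply_top (hr : 1 ≤ r) (hn : 2 * r < n) (j k : ℕ) {i : ℕ}
    (hi : i < 2 * r + 1) : (blockPerm n r j k i ⟨2 * r, hn⟩ : ℕ) = 2 * r - i := by
  have hu : uP n r ⟨2 * r, hn⟩ = ⟨2 * r, hn⟩ := uP_apply_of_le hr le_rfl
  have hv : tP n (2 * r) ⟨2 * r, hn⟩ = ⟨2 * r, hn⟩ := tP_apply_of_le le_rfl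
  rw [blockPerm, Perm.mul_apply, Perm.mul_apply, Perm.pow_apply_eq_self_of_apply_eq_self hu,
    vP, ← pow_mul, Perm.pow_apply_eq_self_of_apply_eq_self hv]
  exact tP_pow_apply_sub_one (m := 2 * r + 1) hn hi

lemma vP_pow_mul_uP_pow_apply (hr : 1 ≤ r) (hn : 2 * r ≤ n) {j k : ℕ} (hj : j < 2) (hk : k < r) :
    ((vP n r ^ k * uP n r ^ j) ⟨2 * r - 1, by omega⟩ : ℕ) = 2 * r - 1 - j - 2 * k := by
  have hu : (uP n r ^ j) ⟨2 * r - 1, by omega⟩ = ⟨2 * r - 1 - j, by omega⟩ := by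
    interval_cases j
    · simp
    · apply Fin.ext
      rw [pow_one, uP, Perm.mul_apply, tP_apply_of_le (by simp; omega),
        sP_apply (by omega) (by omega)]
      dsimp only
      split_ifs <;> omega
  rw [Perm.mul_apply, hu, vP, ← pow_mul, tP_pow_apply_of_lt (by simp; omega) hn (by omega),
    if_pos (by simp; omega)]

lemma eq_of_blockPerm_apply_eq (hr : 1 ≤ r) (hn : 2 * r < n) {j k i j' k' i' : ℕ}
    (hj : j < 2) (hk : k < r) (hi : i < 2 * r + 1)
    (hj' : j' < 2) (hk' : k' < r) (hi' : i' < 2 * r + 1)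
    (h : ∀ x : Fin n, 2 * r - 1 ≤ x → blockPerm n r j k i x = blockPerm n r j' k' i' x) :
    j = j' ∧ k = k' ∧ i = i' := by
  have htop := congrArg Fin.val (h ⟨2 * r, hn⟩ (Nat.sub_le _ _))
  rw [blockPerm_apply_top hr hn j k hi, blockPerm_apply_top hr hn j' k' hi'] at htop
  obtain rfl : i = i' := by omega
  have hlow := h ⟨2 * r - 1, by omega⟩ le_rfl
  simp only [blockPerm, mul_assoc, Perm.mul_apply (tP n (2 * r + 1) ^ i)] at hlow
  have hvu := congrArg Fin.val ((tP n (2 * r + 1) ^ i).injective hlow)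
  rw [vP_pow_mul_uP_pow_apply hr hn.le hj hk,
    vP_pow_mul_uP_pow_apply hr hn.le hj' hk'] at hvu
  omega

lemma blockPerm_mem_alternatingGroup (hr : 2 ≤ r) (hn : 2 * r + 1 ≤ n) (j k i : ℕ) :
    blockPerm n r j k i ∈ alternatingGroup (Fin n) :=
  mul_mem (mul_mem (pow_mem (tP_mem_alternatingGroup hn (odd_two_mul_add_one r)) i)
    (pow_mem (vP_mem_alternatingGroup r) k)) (pow_mem (uP_mem_alternatingGroup hr (by omega)) j)

end Blocks

/-- Exponent tuples `(i₃, (j_{2r}, k_{2r}, i_{2r+1})_{2 ≤ r ≤ ℓ})`, with `r = m + 2`. -/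
abbrev Exponents (ℓ : ℕ) : Type :=
  Fin 3 × ((m : Fin (ℓ - 1)) → Fin 2 × Fin (m.1 + 2) × Fin (2 * (m.1 + 2) + 1))

namespace Exponents

variable {ℓ : ℕ}

def block (e : Exponents ℓ) (p : Fin (ℓ - 1)) : Perm (Fin (2 * ℓ + 1)) :=
  blockPerm (2 * ℓ + 1) (p + 2) (e.2 p).1 (e.2 p).2.1 (e.2 p).2.2

def partialWord (e : Exponents ℓ) (m : ℕ) : Perm (Fin (2 * ℓ + 1)) :=
  ((List.finRange (ℓ - 1)).take m).foldl (fun acc p => e.block p * acc)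
    (tP (2 * ℓ + 1) 3 ^ (e.1 : ℕ))

def word (e : Exponents ℓ) : Perm (Fin (2 * ℓ + 1)) :=
  (List.finRange (ℓ - 1)).foldl (fun acc p => e.block p * acc) (tP (2 * ℓ + 1) 3 ^ (e.1 : ℕ))

lemma word_eq_partialWord (e : Exponents ℓ) : e.word = e.partialWord (ℓ - 1) := by
  rw [partialWord, List.take_of_length_le (by simp), word]

lemma partialWord_succ (e : Exponents ℓ) {m : ℕ} (hm : m < ℓ - 1) :
    e.partialWord (m + 1) = e.block ⟨m, hm⟩ * e.partialWord m := by
  rw [partialWord, partialWord, List.take_add_one, List.getElem?_eq_getElem (by simpa using hm)]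
  simp only [List.getElem_finRange, Option.toList_some, List.foldl_append, List.foldl_cons,
    List.foldl_nil]
  rfl

lemma partialWord_apply_of_le (e : Exponents ℓ) {m : ℕ} (hm : m ≤ ℓ - 1) {x : Fin (2 * ℓ + 1)}
    (hx : 2 * m + 3 ≤ x) : e.partialWord m x = x := by
  induction m with
  | zero =>
    exact Perm.pow_apply_eq_self_of_apply_eq_self (tP_apply_of_le (by omega)) _
  | succ m ih =>
    rw [e.partialWord_succ (by omega), Perm.mul_apply, ih (by omega) (by omega)]
    exact blockPerm_apply_of_le (by omega) _ _ _ (by simp; omega)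

lemma eq_of_partialWord_eq (hℓ : 1 ≤ ℓ) {e e' : Exponents ℓ} {m : ℕ} (hm : m ≤ ℓ - 1)
    (h : e.partialWord m = e'.partialWord m) :
    e.1 = e'.1 ∧ ∀ p : Fin (ℓ - 1), p < m → e.2 p = e'.2 p := by
  induction m with
  | zero =>
    refine ⟨Fin.ext ?_, fun p hp => absurd hp (Nat.not_lt_zero _)⟩
    have h2 := congrArg (fun σ => (σ ⟨2, by omega⟩ : ℕ)) h
    simp only [partialWord, List.take_zero, List.foldl_nil] at h2
    have h3 : 3 ≤ 2 * ℓ + 1 := by omega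
    rw [tP_pow_apply_sub_one h3 e.1.2, tP_pow_apply_sub_one h3 e'.1.2] at h2
    omega
  | succ m ih =>
    have hm' : m < ℓ - 1 := by omega
    rw [e.partialWord_succ hm', e'.partialWord_succ hm'] at h
    have hblock : ∀ x : Fin (2 * ℓ + 1), 2 * (m + 2) - 1 ≤ x →
        e.block ⟨m, hm'⟩ x = e'.block ⟨m, hm'⟩ x := by
      intro x hx
      have hx' := Perm.congr_fun h x
      rwa [Perm.mul_apply, Perm.mul_apply, e.partialWord_apply_of_le hm'.le (by omega),
        e'.partialWord_apply_of_le hm'.le (by omega)] at hx'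
    have hlast : e.2 ⟨m, hm'⟩ = e'.2 ⟨m, hm'⟩ := by
      obtain ⟨hj, hk, hi⟩ := eq_of_blockPerm_apply_eq (r := m + 2) (by omega) (by omega)
        (e.2 _).1.2 (e.2 _).2.1.2 (e.2 _).2.2.2 (e'.2 _).1.2 (e'.2 _).2.1.2 (e'.2 _).2.2.2 hblock
      exact Prod.ext (Fin.ext hj) (Prod.ext (Fin.ext hk) (Fin.ext hi))
    rw [block, block, hlast] at h
    obtain ⟨h1, hlt⟩ := ih hm'.le (mul_left_cancel h)
    refine ⟨h1, fun p hp => ?_⟩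
    rcases Nat.lt_or_ge p m with hpm | hpm
    · exact hlt p hpm
    · obtain rfl : p = ⟨m, hm'⟩ := Fin.ext (by simp; omega)
      exact hlast

lemma word_injective (hℓ : 1 ≤ ℓ) : Function.Injective (word : Exponents ℓ → _) := by
  intro e e' h
  rw [word_eq_partialWord, word_eq_partialWord] at h
  obtain ⟨h1, h2⟩ := eq_of_partialWord_eq hℓ le_rfl h
  exact Prod.ext h1 (funext fun p => h2 p p.2)

lemma word_mem_alternatingGroup (hℓ : 1 ≤ ℓ) (e : Exponents ℓ) :
    e.word ∈ alternatingGroup (Fin (2 * ℓ + 1)) :=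
  Subgroup.foldl_mul_left_mem _
    (fun p => blockPerm_mem_alternatingGroup (by omega) (by have := p.2; omega) _ _ _) _
    (pow_mem (tP_mem_alternatingGroup (by omega) (by decide)) _)

lemma six_mul_prod_range (L : ℕ) :
    6 * ∏ m ∈ range L, 2 * ((m + 2) * (2 * (m + 2) + 1)) = (2 * L + 3).factorial := by
  induction L with
  | zero => rfl
  | succ L ih =>
    rw [prod_range_succ, show 2 * (L + 1) + 3 = 2 * L + 3 + 1 + 1 by ring,
      Nat.factorial_succ, Nat.factorial_succ, ← ih]
    ring

lemma two_mul_card (hℓ : 1 ≤ ℓ) : 2 * Fintype.card (Exponents ℓ) = (2 * ℓ + 1).factorial := by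
  have hcard : Fintype.card (Exponents ℓ) =
      3 * ∏ m ∈ range (ℓ - 1), 2 * ((m + 2) * (2 * (m + 2) + 1)) := by
    simp [Fintype.card_pi, ← Fin.prod_univ_eq_prod_range]
  have h6 := six_mul_prod_range (ℓ - 1)
  rw [show 2 * (ℓ - 1) + 3 = 2 * ℓ + 1 by omega] at h6
  omega

end Exponents

/-- for `n = 2ℓ+1`, `ℓ ≥ 1`, every `g ∈ Alt_n` has a unique presentation
`g = t₃^{i₃} · ∏_{r=2}^{ℓ} (u_{2r}^{j_{2r}} · v_{2r}^{k_{2r}} · t_{2r+1}^{i_{2r+1}})`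
(paper left-to-right product over `r` increasing; rendered here in composition order,
so each new block is multiplied on the left).  The index `m : Fin (ℓ-1)` corresponds to
`r = m + 2`, with exponents `j_{2r} ∈ Fin 2`, `k_{2r} ∈ Fin r`, `i_{2r+1} ∈ Fin (2r+1)`. -/
theorem ogs_alternating_odd (ℓ : ℕ) (hℓ : 1 ≤ ℓ)
    (g : Equiv.Perm (Fin (2 * ℓ + 1))) (hg : g ∈ alternatingGroup (Fin (2 * ℓ + 1))) :
    ∃! e : Fin 3 × ((m : Fin (ℓ - 1)) → Fin 2 × Fin (m.1 + 2) × Fin (2 * (m.1 + 2) + 1)),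
      (List.finRange (ℓ - 1)).foldl
        (fun acc m =>
          tP (2 * ℓ + 1) (2 * (m.1 + 2) + 1) ^ (((e.2 m).2.2 : ℕ)) *
          vP (2 * ℓ + 1) (m.1 + 2) ^ (((e.2 m).2.1 : ℕ)) *
          uP (2 * ℓ + 1) (m.1 + 2) ^ (((e.2 m).1 : ℕ)) * acc)
        (tP (2 * ℓ + 1) 3 ^ ((e.1 : ℕ))) = g := by
  show ∃! e : Exponents ℓ, e.word = g
  let f : Exponents ℓ → alternatingGroup (Fin (2 * ℓ + 1)) :=
    fun e => ⟨e.word, e.word_mem_alternatingGroup hℓ⟩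
  have hf : Function.Bijective f := by
    refine (Fintype.bijective_iff_injective_and_card f).2
      ⟨fun e e' h => Exponents.word_injective hℓ (congrArg Subtype.val h), ?_⟩
    have : Nontrivial (Fin (2 * ℓ + 1)) := Fin.nontrivial_iff_two_le.2 (by omega)
    have hAlt := two_mul_card_alternatingGroup (α := Fin (2 * ℓ + 1))
    rw [Fintype.card_perm, Fintype.card_fin, ← Exponents.two_mul_card hℓ] at hAlt
    omega
  obtain ⟨e, he, huniq⟩ := hf.existsUnique ⟨g, hg⟩
  exact ⟨e, congrArg Subtype.val he, fun e' he' => huniq e' (Subtype.ext he')⟩
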